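/- arXiv:math/0506107 — 2 statements merged into one kernel-verified Lean document; each statement's English description precedes it below -/
import Mathlib

section
/- Let M be a real symmetric n×n matrix with M_{i,j} ≥ 0 for i ≠ j and column sums ∑_i M_{i,j} ≤ 0 for all j. Suppose moreover that the graph on {1,…,n} with an edge between i and j whenever M_{i,j} > 0 is connected, and that ∑_i M_{i,j₀} < 0 for at least one index j₀. Then M is negative definite. -/
open Matrix

/-- A real symmetric matrix with nonnegative off-diagonal entries, nonpositive
column sums, at least one strictly negative column sum, whose associated graph
(edges where `M i j > 0`) is connected, is negative definite. -/
theorem stmt_1 (n : ℕ) (M : Matrix (Fin n) (Fin n) ℝ)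
    (hsymm : M.IsSymm)
    (hoff : ∀ i j, i ≠ j → 0 ≤ M i j)
    (hcol : ∀ j, ∑ i, M i j ≤ 0)
    (hconn : ∀ i j : Fin n, Relation.ReflTransGen (fun a b => a ≠ b ∧ 0 < M a b) i j)
    (hneg : ∃ j₀, ∑ i, M i j₀ < 0) :
    ∀ v : Fin n → ℝ, v ≠ 0 → v ⬝ᵥ M.mulVec v < 0 := by
  intro v hv
  have hM : ∀ i j, M i j = M j i := by
    intro i j
    have := congrFun (congrFun hsymm j) i
    simpa [Matrix.transpose_apply] using this
  set c : Fin n → ℝ := fun j => ∑ i, M i j with hc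
  set S : ℝ := ∑ i, ∑ j, M i j * (v i - v j) ^ 2 with hS
  set T : ℝ := ∑ j, c j * v j ^ 2 with hT
  -- key identity
  have h2 : ∑ i, ∑ j, M i j * v i ^ 2 = T := by
    rw [hT]
    apply Finset.sum_congr rfl
    intro i _
    rw [hc, ← Finset.sum_mul]
    congr 1
    exact Finset.sum_congr rfl fun j _ => hM i j
  have h3 : ∑ i, ∑ j, M i j * v j ^ 2 = T := by
    rw [Finset.sum_comm, hT]
    apply Finset.sum_congr rfl
    intro j _
    rw [hc, ← Finset.sum_mul]
  have h4 : ∑ i, ∑ j, M i j * (v i * v j) = v ⬝ᵥ M.mulVec v := by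
    simp only [dotProduct, mulVec, Finset.mul_sum]
    apply Finset.sum_congr rfl
    intro i _
    apply Finset.sum_congr rfl
    intro j _
    ring
  have h1 : S = ∑ i, ∑ j, (M i j * v i ^ 2 + M i j * v j ^ 2
      - 2 * (M i j * (v i * v j))) := by
    rw [hS]
    apply Finset.sum_congr rfl
    intro i _
    apply Finset.sum_congr rfl
    intro j _
    ring
  have hsplit : S = (∑ i, ∑ j, M i j * v i ^ 2) + (∑ i, ∑ j, M i j * v j ^ 2)
      - 2 * (∑ i, ∑ j, M i j * (v i * v j)) := by
    rw [h1]
    simp [Finset.sum_add_distrib, Finset.sum_sub_distrib, Finset.mul_sum]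
  have key : v ⬝ᵥ M.mulVec v = T - S / 2 := by
    rw [hsplit, h2, h3, h4]; ring
  -- nonnegativity of each term of S
  have hSterm : ∀ i j : Fin n, 0 ≤ M i j * (v i - v j) ^ 2 := by
    intro i j
    by_cases hij : i = j
    · simp [hij]
    · exact mul_nonneg (hoff i j hij) (sq_nonneg _)
  have hSnn : 0 ≤ S := by
    rw [hS]
    apply Finset.sum_nonneg
    intro i _
    exact Finset.sum_nonneg fun j _ => hSterm i j
  -- each term of T is nonpositive
  have hTterm : ∀ j : Fin n, c j * v j ^ 2 ≤ 0 :=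
    fun j => mul_nonpos_of_nonpos_of_nonneg (hcol j) (sq_nonneg _)
  have hTnp : T ≤ 0 := by
    rw [hT]
    exact Finset.sum_nonpos fun j _ => hTterm j
  -- edge lemma
  have edge : ∀ {i j : Fin n},
      Relation.ReflTransGen (fun a b => a ≠ b ∧ 0 < M a b) i j → v i ≠ v j →
      ∃ a b, a ≠ b ∧ 0 < M a b ∧ v a ≠ v b := by
    intro i j h
    induction h with
    | refl => intro h; exact absurd rfl h
    | @tail b c hib hbc ih =>
      intro hij
      by_cases hvb : v b = v c
      · exact ih (fun h => hij (h.trans hvb))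
      · exact ⟨b, c, hbc.1, hbc.2, hvb⟩
  obtain ⟨j₀, hj0⟩ := hneg
  have hcj0 : c j₀ < 0 := hj0
  obtain ⟨k, hk⟩ : ∃ k, v k ≠ 0 := by
    by_contra h
    push_neg at h
    exact hv (funext fun i => h i)
  by_cases hvj0 : v j₀ = 0
  · -- find an edge with differing values
    obtain ⟨a, b, hab, hMab, hvab⟩ := edge (hconn k j₀) (by rw [hvj0]; exact hk)
    have hterm : 0 < M a b * (v a - v b) ^ 2 := by
      have hne : v a - v b ≠ 0 := sub_ne_zero.mpr hvab
      exact mul_pos hMab (by positivity)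
    have hrow : M a b * (v a - v b) ^ 2 ≤ ∑ j, M a j * (v a - v j) ^ 2 :=
      Finset.single_le_sum (fun j _ => hSterm a j) (Finset.mem_univ b)
    have hSpos : M a b * (v a - v b) ^ 2 ≤ S := by
      refine hrow.trans ?_
      rw [hS]
      exact Finset.single_le_sum
        (fun i _ => Finset.sum_nonneg fun j _ => hSterm i j) (Finset.mem_univ a)
    rw [key]
    linarith
  · have hj0term : c j₀ * v j₀ ^ 2 < 0 :=
      mul_neg_of_neg_of_pos hcj0 (by positivity)
    have hTlt : T ≤ c j₀ * v j₀ ^ 2 := by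
      have h := Finset.single_le_sum (f := fun j => -(c j * v j ^ 2))
        (fun j _ => neg_nonneg.mpr (hTterm j)) (Finset.mem_univ j₀)
      simp only [Finset.sum_neg_distrib] at h
      rw [hT]
      linarith
    rw [key]
    linarith
end

section
/- Let T_{p,q,r} be the tree consisting of three paths of lengths p, q, r emanating from a common central vertex (so it has p+q+r−2 vertices), with bilinear form −2 on the diagonal and adjacency off the diagonal. This bilinear form is negative definite if and only if 1/p + 1/q + 1/r > 1. -/
open Matrix

/-- Edge relation of the star-shaped tree `T_{p,q,r}`: a central vertex (index `0`)
with three arms of `p-1`, `q-1`, `r-1` further vertices, the arms occupying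
indices `1,…,p-1`, `p,…,p+q-2` and `p+q-1,…,p+q+r-3` respectively. -/
def tTreeEdge (p q r : ℕ) (a b : ℕ) : Prop :=
  (2 ≤ p ∧ a = 0 ∧ b = 1) ∨ (1 ≤ a ∧ a + 1 = b ∧ b ≤ p - 1) ∨
  (2 ≤ q ∧ a = 0 ∧ b = p) ∨ (p ≤ a ∧ a + 1 = b ∧ b ≤ p + q - 2) ∨
  (2 ≤ r ∧ a = 0 ∧ b = p + q - 1) ∨ (p + q - 1 ≤ a ∧ a + 1 = b ∧ b ≤ p + q + r - 3)

instance (p q r a b : ℕ) : Decidable (tTreeEdge p q r a b) := by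
  unfold tTreeEdge; infer_instance

/-- The intersection matrix of the tree `T_{p,q,r}`: `-2` on the diagonal and `1`
for each pair of adjacent vertices. -/
def tTreeMatrix (p q r : ℕ) : Matrix (Fin (p + q + r - 2)) (Fin (p + q + r - 2)) ℝ :=
  fun i j =>
    if i = j then -2
    else if tTreeEdge p q r i.val j.val ∨ tTreeEdge p q r j.val i.val then 1 else 0


open Finset

/-- Extension of a vector on `Fin N` to all of `ℕ` by zero. -/
def ttVx (N : ℕ) (v : Fin N → ℝ) (n : ℕ) : ℝ := if h : n < N then v ⟨n, h⟩ else 0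

/-- The sum of squares associated to one arm of length `m` (center value `y 0`). -/
noncomputable def ttSos (m : ℕ) (y : ℕ → ℝ) : ℝ :=
  ∑ j ∈ range m, (((m:ℝ)+1-j)/((m:ℝ)-j)) * (y (j+1) - (((m:ℝ)-j)/((m:ℝ)+1-j)) * y j)^2

lemma armX (m : ℕ) (x : ℕ → ℝ) :
    -2 * ∑ k ∈ range m, x (k+1) ^ 2 + 2 * ∑ k ∈ range m, x (k+1) * x (k+2)
    = -(∑ k ∈ range m, (((k:ℝ)+2)/((k:ℝ)+1)) * (x (k+1) - (((k:ℝ)+1)/((k:ℝ)+2)) * x (k+2))^2)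
      + ((m : ℝ)/((m:ℝ)+1)) * x (m+1) ^ 2 := by
  induction m with
  | zero => simp
  | succ n ih =>
    rw [Finset.sum_range_succ, Finset.sum_range_succ, Finset.sum_range_succ]
    have h1 : ((n:ℝ)+1) ≠ 0 := by positivity
    have h2 : ((n:ℝ)+2) ≠ 0 := by positivity
    have key : -2 * x (n+1) ^ 2 + 2 * (x (n+1) * x (n+2)) + ((n:ℝ)/((n:ℝ)+1)) * x (n+1)^2
        = -((((n:ℝ)+2)/((n:ℝ)+1)) * (x (n+1) - (((n:ℝ)+1)/((n:ℝ)+2)) * x (n+2))^2)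
          + (((n:ℝ)+1)/((n:ℝ)+2)) * x (n+2) ^ 2 := by
      field_simp
      ring
    push_cast
    linear_combination ih + key

/-- Completing the square along a path, center-first coordinates (`y 0` is the center,
the arm has `m` further vertices `y 1, …, y m`). -/
lemma armY (m : ℕ) (y : ℕ → ℝ) :
    -2 * ∑ j ∈ range m, y (j+1) ^ 2 + 2 * ∑ j ∈ range m, y j * y (j+1)
    = -(∑ j ∈ range m, (((m:ℝ)+1-j)/((m:ℝ)-j)) * (y (j+1) - (((m:ℝ)-j)/((m:ℝ)+1-j)) * y j)^2)
      + ((m : ℝ)/((m:ℝ)+1)) * y 0 ^ 2 := by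
  have hx := armX m (fun k => y (m+1-k))
  have e1 : ∑ k ∈ range m, y (m+1-(k+1)) ^ 2 = ∑ j ∈ range m, y (j+1) ^ 2 := by
    rw [← Finset.sum_range_reflect (fun j => y (j+1) ^ 2) m]
    apply Finset.sum_congr rfl
    intro k hk
    simp only [Finset.mem_range] at hk
    congr 2
    omega
  have e2 : ∑ k ∈ range m, y (m+1-(k+1)) * y (m+1-(k+2)) = ∑ j ∈ range m, y j * y (j+1) := by
    rw [← Finset.sum_range_reflect (fun j => y j * y (j+1)) m]
    apply Finset.sum_congr rfl
    intro k hk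
    simp only [Finset.mem_range] at hk
    have h1 : m + 1 - (k+1) = (m - 1 - k) + 1 := by omega
    have h2 : m + 1 - (k+2) = m - 1 - k := by omega
    rw [h1, h2, mul_comm]
  have e3 : ∑ k ∈ range m, (((k:ℝ)+2)/((k:ℝ)+1)) * (y (m+1-(k+1)) - (((k:ℝ)+1)/((k:ℝ)+2)) * y (m+1-(k+2)))^2
      = ∑ j ∈ range m, (((m:ℝ)+1-j)/((m:ℝ)-j)) * (y (j+1) - (((m:ℝ)-j)/((m:ℝ)+1-j)) * y j)^2 := by
    rw [← Finset.sum_range_reflect (fun j => (((m:ℝ)+1-j)/((m:ℝ)-j)) * (y (j+1) - (((m:ℝ)-j)/((m:ℝ)+1-j)) * y j)^2) m]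
    apply Finset.sum_congr rfl
    intro k hk
    simp only [Finset.mem_range] at hk
    have h1 : m + 1 - (k+1) = (m - 1 - k) + 1 := by omega
    have h2 : m + 1 - (k+2) = m - 1 - k := by omega
    have h3 : ((m - 1 - k : ℕ) : ℝ) = (m:ℝ) - 1 - k := by
      rw [show m - 1 - k = m - (k+1) by omega, Nat.cast_sub hk]
      push_cast; ring
    have hk1 : ((k:ℝ)+1) ≠ 0 := by positivity
    have hk2 : ((k:ℝ)+2) ≠ 0 := by positivity
    rw [h1, h2, h3]
    have c1 : (↑m + 1 - ((m:ℝ) - 1 - ↑k)) = (k:ℝ) + 2 := by ring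
    have c2 : ((m:ℝ) - ((m:ℝ) - 1 - ↑k)) = (k:ℝ) + 1 := by ring
    rw [c1, c2]
  rw [e1, e2, e3, Nat.sub_self] at hx
  exact hx

lemma point_sum (N c d : ℕ) (P : Prop) [Decidable P] (hcd : P → c < N ∧ d < N) (f : ℕ → ℕ → ℝ) :
    ∑ a ∈ range N, ∑ b ∈ range N, (if P ∧ a = c ∧ b = d then 1 else 0) * f a b
    = if P then f c d else 0 := by
  by_cases hP : P
  · obtain ⟨hc, hd⟩ := hcd hP
    rw [Finset.sum_eq_single_of_mem c (Finset.mem_range.mpr hc)]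
    · rw [Finset.sum_eq_single_of_mem d (Finset.mem_range.mpr hd)]
      · simp [hP]
      · intro b _ hb; simp [hb]
    · intro a _ ha
      apply Finset.sum_eq_zero
      intro b _
      simp [ha]
  · simp [hP]

lemma chain_sum (N l u : ℕ) (hu : u < N) (f : ℕ → ℕ → ℝ) :
    ∑ a ∈ range N, ∑ b ∈ range N, (if l ≤ a ∧ a + 1 = b ∧ b ≤ u then 1 else 0) * f a b
    = ∑ a ∈ Finset.Ico l u, f a (a+1) := by
  have inner : ∀ a, a ∈ range N → ∑ b ∈ range N, (if l ≤ a ∧ a + 1 = b ∧ b ≤ u then (1:ℝ) else 0) * f a b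
      = if l ≤ a ∧ a < u then f a (a+1) else 0 := by
    intro a _
    by_cases h : l ≤ a ∧ a < u
    · rw [Finset.sum_eq_single_of_mem (a+1) (Finset.mem_range.mpr (by omega))]
      · rw [if_pos h, if_pos ⟨h.1, rfl, by omega⟩, one_mul]
      · intro b _ hb
        rw [if_neg (by tauto), zero_mul]
    · rw [if_neg h]
      apply Finset.sum_eq_zero
      intro b _
      rw [if_neg (by omega), zero_mul]
  rw [Finset.sum_congr rfl inner, Finset.sum_ite, Finset.sum_const_zero, add_zero]
  apply Finset.sum_congr
  · ext a; simp [Finset.mem_filter]; omega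
  · intros; rfl

lemma edge_lt {p q r a b : ℕ} (hp : 1 ≤ p) (hq : 1 ≤ q) (h : tTreeEdge p q r a b) : a < b := by
  unfold tTreeEdge at h; omega

lemma coeff_split (p q r : ℕ) (hp : 1 ≤ p) (hq : 1 ≤ q) (a b : ℕ) :
    (if a = b then (-2:ℝ) else if tTreeEdge p q r a b ∨ tTreeEdge p q r b a then 1 else 0)
    = (if a = b then (-2:ℝ) else 0) + (if tTreeEdge p q r a b then 1 else 0)
      + (if tTreeEdge p q r b a then 1 else 0) := by
  by_cases hab : a = b
  · subst hab
    have h1 : ¬ tTreeEdge p q r a a := fun h => by have := edge_lt hp hq h; omega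
    simp [h1]
  · by_cases h1 : tTreeEdge p q r a b
    · have h2 : ¬ tTreeEdge p q r b a := fun h => by
        have := edge_lt hp hq h; have := edge_lt hp hq h1; omega
      simp [hab, h1, h2]
    · by_cases h2 : tTreeEdge p q r b a <;> simp [hab, h1, h2]

lemma edge_split (p q r : ℕ) (hp : 1 ≤ p) (hq : 1 ≤ q) (hr : 1 ≤ r) (a b : ℕ) :
    (if tTreeEdge p q r a b then (1:ℝ) else 0) =
      (if 2 ≤ p ∧ a = 0 ∧ b = 1 then (1:ℝ) else 0)
    + (if 1 ≤ a ∧ a + 1 = b ∧ b ≤ p - 1 then 1 else 0)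
    + (if 2 ≤ q ∧ a = 0 ∧ b = p then 1 else 0)
    + (if p ≤ a ∧ a + 1 = b ∧ b ≤ p + q - 2 then 1 else 0)
    + (if 2 ≤ r ∧ a = 0 ∧ b = p + q - 1 then 1 else 0)
    + (if p + q - 1 ≤ a ∧ a + 1 = b ∧ b ≤ p + q + r - 3 then 1 else 0) := by
  by_cases h : tTreeEdge p q r a b
  · rw [if_pos h]
    unfold tTreeEdge at h
    rcases h with hc | hc | hc | hc | hc | hc
    · rw [if_pos hc,
        if_neg (by omega : ¬(1 ≤ a ∧ a + 1 = b ∧ b ≤ p - 1)),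
        if_neg (by omega : ¬(2 ≤ q ∧ a = 0 ∧ b = p)),
        if_neg (by omega : ¬(p ≤ a ∧ a + 1 = b ∧ b ≤ p + q - 2)),
        if_neg (by omega : ¬(2 ≤ r ∧ a = 0 ∧ b = p + q - 1)),
        if_neg (by omega : ¬(p + q - 1 ≤ a ∧ a + 1 = b ∧ b ≤ p + q + r - 3))]
      norm_num
    · rw [if_pos hc,
        if_neg (by omega : ¬(2 ≤ p ∧ a = 0 ∧ b = 1)),
        if_neg (by omega : ¬(2 ≤ q ∧ a = 0 ∧ b = p)),
        if_neg (by omega : ¬(p ≤ a ∧ a + 1 = b ∧ b ≤ p + q - 2)),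
        if_neg (by omega : ¬(2 ≤ r ∧ a = 0 ∧ b = p + q - 1)),
        if_neg (by omega : ¬(p + q - 1 ≤ a ∧ a + 1 = b ∧ b ≤ p + q + r - 3))]
      norm_num
    · rw [if_pos hc,
        if_neg (by omega : ¬(2 ≤ p ∧ a = 0 ∧ b = 1)),
        if_neg (by omega : ¬(1 ≤ a ∧ a + 1 = b ∧ b ≤ p - 1)),
        if_neg (by omega : ¬(p ≤ a ∧ a + 1 = b ∧ b ≤ p + q - 2)),
        if_neg (by omega : ¬(2 ≤ r ∧ a = 0 ∧ b = p + q - 1)),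
        if_neg (by omega : ¬(p + q - 1 ≤ a ∧ a + 1 = b ∧ b ≤ p + q + r - 3))]
      norm_num
    · rw [if_pos hc,
        if_neg (by omega : ¬(2 ≤ p ∧ a = 0 ∧ b = 1)),
        if_neg (by omega : ¬(1 ≤ a ∧ a + 1 = b ∧ b ≤ p - 1)),
        if_neg (by omega : ¬(2 ≤ q ∧ a = 0 ∧ b = p)),
        if_neg (by omega : ¬(2 ≤ r ∧ a = 0 ∧ b = p + q - 1)),
        if_neg (by omega : ¬(p + q - 1 ≤ a ∧ a + 1 = b ∧ b ≤ p + q + r - 3))]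
      norm_num
    · rw [if_pos hc,
        if_neg (by omega : ¬(2 ≤ p ∧ a = 0 ∧ b = 1)),
        if_neg (by omega : ¬(1 ≤ a ∧ a + 1 = b ∧ b ≤ p - 1)),
        if_neg (by omega : ¬(2 ≤ q ∧ a = 0 ∧ b = p)),
        if_neg (by omega : ¬(p ≤ a ∧ a + 1 = b ∧ b ≤ p + q - 2)),
        if_neg (by omega : ¬(p + q - 1 ≤ a ∧ a + 1 = b ∧ b ≤ p + q + r - 3))]
      norm_num
    · rw [if_pos hc,
        if_neg (by omega : ¬(2 ≤ p ∧ a = 0 ∧ b = 1)),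
        if_neg (by omega : ¬(1 ≤ a ∧ a + 1 = b ∧ b ≤ p - 1)),
        if_neg (by omega : ¬(2 ≤ q ∧ a = 0 ∧ b = p)),
        if_neg (by omega : ¬(p ≤ a ∧ a + 1 = b ∧ b ≤ p + q - 2)),
        if_neg (by omega : ¬(2 ≤ r ∧ a = 0 ∧ b = p + q - 1))]
      norm_num
  · have h' := h
    unfold tTreeEdge at h'
    rw [if_neg h,
      if_neg (fun hc => h' (Or.inl hc)),
      if_neg (fun hc => h' (Or.inr (Or.inl hc))),
      if_neg (fun hc => h' (Or.inr (Or.inr (Or.inl hc)))),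
      if_neg (fun hc => h' (Or.inr (Or.inr (Or.inr (Or.inl hc))))),
      if_neg (fun hc => h' (Or.inr (Or.inr (Or.inr (Or.inr (Or.inl hc)))))),
      if_neg (fun hc => h' (Or.inr (Or.inr (Or.inr (Or.inr (Or.inr hc))))))]
    norm_num


lemma ttSos_term_nonneg (m j : ℕ) (hj : j < m) (y : ℕ → ℝ) :
    0 ≤ (((m:ℝ)+1-j)/((m:ℝ)-j)) * (y (j+1) - (((m:ℝ)-j)/((m:ℝ)+1-j)) * y j)^2 := by
  have h1 : (0:ℝ) < (m:ℝ) - j := by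
    have : (j:ℝ) < m := by exact_mod_cast hj
    linarith
  have h2 : (0:ℝ) < (m:ℝ) + 1 - j := by linarith
  positivity

lemma ttSos_nonneg (m : ℕ) (y : ℕ → ℝ) : 0 ≤ ttSos m y := by
  apply Finset.sum_nonneg
  intro j hj
  exact ttSos_term_nonneg m j (Finset.mem_range.mp hj) y

lemma ttSos_zero (m : ℕ) (y : ℕ → ℝ) (h : ttSos m y = 0) (h0 : y 0 = 0) :
    ∀ j, j ≤ m → y j = 0 := by
  have hterm : ∀ j < m, y (j+1) = (((m:ℝ)-j)/((m:ℝ)+1-j)) * y j := by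
    intro j hj
    have hz := (Finset.sum_eq_zero_iff_of_nonneg
      (fun j hj => ttSos_term_nonneg m j (Finset.mem_range.mp hj) y)).mp h j
      (Finset.mem_range.mpr hj)
    have h1 : (0:ℝ) < (m:ℝ) - j := by
      have : (j:ℝ) < m := by exact_mod_cast hj
      linarith
    have h2 : (0:ℝ) < (m:ℝ) + 1 - j := by linarith
    have hcoef : (0:ℝ) < ((m:ℝ)+1-j)/((m:ℝ)-j) := by positivity
    have hsq : (y (j+1) - (((m:ℝ)-j)/((m:ℝ)+1-j)) * y j)^2 = 0 := by
      rcases mul_eq_zero.mp hz with h' | h'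
      · exact absurd h' (ne_of_gt hcoef)
      · exact h'
    have := pow_eq_zero_iff (n := 2) (by norm_num) |>.mp hsq
    linarith [this]
  intro j
  induction j with
  | zero => intro _; exact h0
  | succ n ih =>
    intro hn
    rw [hterm n (by omega), ih (by omega), mul_zero]

lemma ttSos_eval (m : ℕ) (y : ℕ → ℝ) (hy : ∀ j ≤ m, y j = ((m:ℝ)+1-j)/((m:ℝ)+1)) :
    ttSos m y = 0 := by
  apply Finset.sum_eq_zero
  intro j hj
  rw [Finset.mem_range] at hj
  have h1 : (0:ℝ) < (m:ℝ) - j := by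
    have : (j:ℝ) < m := by exact_mod_cast hj
    linarith
  have h2 : (0:ℝ) < (m:ℝ) + 1 - j := by linarith
  have h3 : (0:ℝ) < (m:ℝ) + 1 := by positivity
  rw [hy j (by omega), hy (j+1) (by omega)]
  have : ((m:ℝ) + 1 - ((j:ℕ)+1:ℕ)) = (m:ℝ) - j := by push_cast; ring
  rw [this]
  have hz : ((m:ℝ) - j)/((m:ℝ)+1) - ((m:ℝ)-j)/((m:ℝ)+1-j) * (((m:ℝ)+1-j)/((m:ℝ)+1)) = 0 := by
    field_simp
    ring
  rw [hz]
  ring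

lemma armY' (m : ℕ) (y : ℕ → ℝ) :
    -2 * ∑ j ∈ range m, y (j+1) ^ 2 + 2 * ∑ j ∈ range m, y j * y (j+1)
    = -(ttSos m y) + ((m : ℝ)/((m:ℝ)+1)) * y 0 ^ 2 := by
  unfold ttSos; exact armY m y

section QF
variable (p q r : ℕ)

lemma tQform (hp : 1 ≤ p) (hq : 1 ≤ q) (hr : 1 ≤ r) (v : Fin (p + q + r - 2) → ℝ) :
    v ⬝ᵥ (tTreeMatrix p q r).mulVec v =
      -(ttSos (p-1) (ttVx (p+q+r-2) v))
      - ttSos (q-1) (fun j => if j = 0 then ttVx (p+q+r-2) v 0 else ttVx (p+q+r-2) v (p-1+j))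
      - ttSos (r-1) (fun j => if j = 0 then ttVx (p+q+r-2) v 0 else ttVx (p+q+r-2) v (p+q-2+j))
      - ((1:ℝ)/p + 1/q + 1/r - 1) * (ttVx (p+q+r-2) v 0)^2 := by
  set W := ttVx (p+q+r-2) v with hWdef
  set Y : ℕ → ℝ := fun j => if j = 0 then W 0 else W (p-1+j) with hYdef
  set Z : ℕ → ℝ := fun j => if j = 0 then W 0 else W (p+q-2+j) with hZdef
  have hW : ∀ i : Fin (p+q+r-2), v i = W i.val := by
    intro i; simp [hWdef, ttVx, i.isLt]
  -- Step 1 : write the quadratic form as a double sum over `range (p+q+r-2)`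
  have step1 : v ⬝ᵥ (tTreeMatrix p q r).mulVec v
      = ∑ a ∈ range (p+q+r-2), ∑ b ∈ range (p+q+r-2),
          W a * ((if a = b then (-2:ℝ)
            else if tTreeEdge p q r a b ∨ tTreeEdge p q r b a then 1 else 0) * W b) := by
    rw [← Fin.sum_univ_eq_sum_range (fun a => ∑ b ∈ range (p+q+r-2),
        W a * ((if a = b then (-2:ℝ)
          else if tTreeEdge p q r a b ∨ tTreeEdge p q r b a then 1 else 0) * W b)) (p+q+r-2)]
    simp only [dotProduct, Matrix.mulVec, Finset.mul_sum]
    refine Finset.sum_congr rfl fun i _ => ?_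
    rw [← Fin.sum_univ_eq_sum_range (fun b => W i.val * ((if i.val = b then (-2:ℝ)
        else if tTreeEdge p q r i.val b ∨ tTreeEdge p q r b i.val then 1 else 0) * W b)) (p+q+r-2)]
    refine Finset.sum_congr rfl fun j _ => ?_
    rw [← hW i, ← hW j]
    have : (tTreeMatrix p q r) i j = (if i.val = j.val then (-2:ℝ)
        else if tTreeEdge p q r i.val j.val ∨ tTreeEdge p q r j.val i.val then 1 else 0) := by
      by_cases hij : i = j
      · simp [tTreeMatrix, hij]
      · have : ¬ (i.val = j.val) := fun h => hij (Fin.ext h)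
        simp [tTreeMatrix, hij, this]
    rw [this]
  -- Step 2 : split the coefficient and the sums
  have step2 : v ⬝ᵥ (tTreeMatrix p q r).mulVec v
      = (∑ a ∈ range (p+q+r-2), ∑ b ∈ range (p+q+r-2), W a * ((if a = b then (-2:ℝ) else 0) * W b))
      + (∑ a ∈ range (p+q+r-2), ∑ b ∈ range (p+q+r-2), (if tTreeEdge p q r a b then (1:ℝ) else 0) * (W a * W b))
      + (∑ a ∈ range (p+q+r-2), ∑ b ∈ range (p+q+r-2), (if tTreeEdge p q r b a then (1:ℝ) else 0) * (W a * W b)) := by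
    rw [step1, ← Finset.sum_add_distrib, ← Finset.sum_add_distrib]
    refine Finset.sum_congr rfl fun a _ => ?_
    rw [← Finset.sum_add_distrib, ← Finset.sum_add_distrib]
    refine Finset.sum_congr rfl fun b _ => ?_
    rw [coeff_split p q r hp hq a b]
    ring
  -- the transposed edge sum equals the direct one
  have step3 : (∑ a ∈ range (p+q+r-2), ∑ b ∈ range (p+q+r-2), (if tTreeEdge p q r b a then (1:ℝ) else 0) * (W a * W b))
      = ∑ a ∈ range (p+q+r-2), ∑ b ∈ range (p+q+r-2), (if tTreeEdge p q r a b then (1:ℝ) else 0) * (W a * W b) := by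
    rw [Finset.sum_comm]
    refine Finset.sum_congr rfl fun a _ => Finset.sum_congr rfl fun b _ => ?_
    ring
  -- diagonal sum
  have step4 : (∑ a ∈ range (p+q+r-2), ∑ b ∈ range (p+q+r-2), W a * ((if a = b then (-2:ℝ) else 0) * W b))
      = -2 * ∑ a ∈ range (p+q+r-2), (W a)^2 := by
    rw [Finset.mul_sum]
    refine Finset.sum_congr rfl fun a ha => ?_
    rw [Finset.sum_eq_single_of_mem a ha]
    · simp; ring
    · intro b _ hb
      have : ¬ (a = b) := fun h => hb h.symm
      simp [this]
  -- edge double sum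
  have e1 := point_sum (p+q+r-2) 0 1 (2 ≤ p) (fun _ => ⟨by omega, by omega⟩) (fun a b => W a * W b)
  have e3 := point_sum (p+q+r-2) 0 p (2 ≤ q) (fun _ => ⟨by omega, by omega⟩) (fun a b => W a * W b)
  have e5 := point_sum (p+q+r-2) 0 (p+q-1) (2 ≤ r) (fun _ => ⟨by omega, by omega⟩) (fun a b => W a * W b)
  have c2 := chain_sum (p+q+r-2) 1 (p-1) (by omega) (fun a b => W a * W b)
  have c4 := chain_sum (p+q+r-2) p (p+q-2) (by omega) (fun a b => W a * W b)
  have c6 := chain_sum (p+q+r-2) (p+q-1) (p+q+r-3) (by omega) (fun a b => W a * W b)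
  have step5 : (∑ a ∈ range (p+q+r-2), ∑ b ∈ range (p+q+r-2), (if tTreeEdge p q r a b then (1:ℝ) else 0) * (W a * W b))
      = ((if 2 ≤ p then W 0 * W 1 else 0) + (∑ a ∈ Finset.Ico 1 (p-1), W a * W (a+1)))
      + ((if 2 ≤ q then W 0 * W p else 0) + (∑ a ∈ Finset.Ico p (p+q-2), W a * W (a+1)))
      + ((if 2 ≤ r then W 0 * W (p+q-1) else 0) + (∑ a ∈ Finset.Ico (p+q-1) (p+q+r-3), W a * W (a+1))) := by
    have expand : ∀ a b : ℕ, (if tTreeEdge p q r a b then (1:ℝ) else 0) * (W a * W b)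
        = (if 2 ≤ p ∧ a = 0 ∧ b = 1 then (1:ℝ) else 0) * (W a * W b)
        + (if 1 ≤ a ∧ a + 1 = b ∧ b ≤ p - 1 then (1:ℝ) else 0) * (W a * W b)
        + (if 2 ≤ q ∧ a = 0 ∧ b = p then (1:ℝ) else 0) * (W a * W b)
        + (if p ≤ a ∧ a + 1 = b ∧ b ≤ p + q - 2 then (1:ℝ) else 0) * (W a * W b)
        + (if 2 ≤ r ∧ a = 0 ∧ b = p + q - 1 then (1:ℝ) else 0) * (W a * W b)
        + (if p + q - 1 ≤ a ∧ a + 1 = b ∧ b ≤ p + q + r - 3 then (1:ℝ) else 0) * (W a * W b) := by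
      intro a b
      rw [edge_split p q r hp hq hr a b]
      ring
    calc (∑ a ∈ range (p+q+r-2), ∑ b ∈ range (p+q+r-2), (if tTreeEdge p q r a b then (1:ℝ) else 0) * (W a * W b))
        = (∑ a ∈ range (p+q+r-2), ∑ b ∈ range (p+q+r-2),
            ((if 2 ≤ p ∧ a = 0 ∧ b = 1 then (1:ℝ) else 0) * (W a * W b)
            + (if 1 ≤ a ∧ a + 1 = b ∧ b ≤ p - 1 then (1:ℝ) else 0) * (W a * W b)
            + (if 2 ≤ q ∧ a = 0 ∧ b = p then (1:ℝ) else 0) * (W a * W b)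
            + (if p ≤ a ∧ a + 1 = b ∧ b ≤ p + q - 2 then (1:ℝ) else 0) * (W a * W b)
            + (if 2 ≤ r ∧ a = 0 ∧ b = p + q - 1 then (1:ℝ) else 0) * (W a * W b)
            + (if p + q - 1 ≤ a ∧ a + 1 = b ∧ b ≤ p + q + r - 3 then (1:ℝ) else 0) * (W a * W b))) := by
          exact Finset.sum_congr rfl fun a _ => Finset.sum_congr rfl fun b _ => expand a b
      _ = _ := by
          simp only [Finset.sum_add_distrib]
          rw [e1, e3, e5, c2, c4, c6]
          ring
  -- arm cross sums
  have hY0 : Y 0 = W 0 := by simp [hYdef]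
  have hZ0 : Z 0 = W 0 := by simp [hZdef]
  have arm1cross : (∑ j ∈ range (p-1), W j * W (j+1))
      = (if 2 ≤ p then W 0 * W 1 else 0) + ∑ a ∈ Finset.Ico 1 (p-1), W a * W (a+1) := by
    rcases Nat.lt_or_ge p 2 with h2 | h2
    · have hp1 : p = 1 := by omega
      rw [if_neg (by omega), hp1]
      simp
    · rw [Finset.range_eq_Ico, Finset.sum_eq_sum_Ico_succ_bot (by omega : 0 < p-1), if_pos h2]
  have arm2cross : (∑ j ∈ range (q-1), Y j * Y (j+1))
      = (if 2 ≤ q then W 0 * W p else 0) + ∑ a ∈ Finset.Ico p (p+q-2), W a * W (a+1) := by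
    rcases Nat.lt_or_ge q 2 with h2 | h2
    · have hq1 : q = 1 := by omega
      rw [if_neg (by omega), Finset.Ico_eq_empty (by omega), hq1]
      simp
    · rw [Finset.range_eq_Ico, Finset.sum_eq_sum_Ico_succ_bot (by omega : 0 < q-1), if_pos h2]
      have hY1 : Y (0+1) = W p := by
        simp only [hYdef]
        rw [if_neg (by omega)]
        congr 1
        omega
      rw [hY0, hY1]
      congr 1
      rw [Finset.sum_Ico_eq_sum_range, Finset.sum_Ico_eq_sum_range,
        (by omega : q - 1 - (0+1) = p + q - 2 - p)]
      refine Finset.sum_congr rfl fun i _ => ?_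
      have hA : Y (0+1+i) = W (p+i) := by
        simp only [hYdef]; rw [if_neg (by omega)]; congr 1; omega
      have hB : Y (0+1+i+1) = W (p+i+1) := by
        simp only [hYdef]; rw [if_neg (by omega)]; congr 1; omega
      rw [hA, hB]
  have arm3cross : (∑ j ∈ range (r-1), Z j * Z (j+1))
      = (if 2 ≤ r then W 0 * W (p+q-1) else 0) + ∑ a ∈ Finset.Ico (p+q-1) (p+q+r-3), W a * W (a+1) := by
    rcases Nat.lt_or_ge r 2 with h2 | h2
    · have hr1 : r = 1 := by omega
      rw [if_neg (by omega), Finset.Ico_eq_empty (by omega), hr1]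
      simp
    · rw [Finset.range_eq_Ico, Finset.sum_eq_sum_Ico_succ_bot (by omega : 0 < r-1), if_pos h2]
      have hZ1 : Z (0+1) = W (p+q-1) := by
        simp only [hZdef]
        rw [if_neg (by omega)]
        congr 1
        omega
      rw [hZ0, hZ1]
      congr 1
      rw [Finset.sum_Ico_eq_sum_range, Finset.sum_Ico_eq_sum_range,
        (by omega : r - 1 - (0+1) = p + q + r - 3 - (p+q-1))]
      refine Finset.sum_congr rfl fun i _ => ?_
      have hA : Z (0+1+i) = W (p+q-1+i) := by
        simp only [hZdef]; rw [if_neg (by omega)]; congr 1; omega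
      have hB : Z (0+1+i+1) = W (p+q-1+i+1) := by
        simp only [hZdef]; rw [if_neg (by omega)]; congr 1; omega
      rw [hA, hB]
  -- diagonal split
  have diag : (∑ a ∈ range (p+q+r-2), (W a)^2)
      = (W 0)^2 + (∑ j ∈ range (p-1), (W (j+1))^2)
        + (∑ j ∈ range (q-1), (Y (j+1))^2) + (∑ j ∈ range (r-1), (Z (j+1))^2) := by
    simp only [Finset.range_eq_Ico]
    rw [← Finset.sum_Ico_consecutive (fun a => (W a)^2) (by omega : 0 ≤ p+q-1) (by omega : p+q-1 ≤ (p+q+r-2)),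
      ← Finset.sum_Ico_consecutive (fun a => (W a)^2) (by omega : 0 ≤ p) (by omega : p ≤ p+q-1),
      ← Finset.sum_Ico_consecutive (fun a => (W a)^2) (by omega : 0 ≤ 1) (by omega : 1 ≤ p)]
    have d0 : (∑ a ∈ Finset.Ico 0 1, (W a)^2) = (W 0)^2 := by
      rw [Finset.sum_Ico_eq_sum_range]
      simp
    have d1 : (∑ a ∈ Finset.Ico 1 p, (W a)^2) = ∑ j ∈ range (p-1), (W (j+1))^2 := by
      rw [Finset.sum_Ico_eq_sum_range, (by omega : p - 1 = p - 1)]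
      refine Finset.sum_congr rfl fun i _ => ?_
      rw [Nat.add_comm]
    have d2 : (∑ a ∈ Finset.Ico p (p+q-1), (W a)^2) = ∑ j ∈ range (q-1), (Y (j+1))^2 := by
      rw [Finset.sum_Ico_eq_sum_range, (by omega : p + q - 1 - p = q - 1)]
      refine Finset.sum_congr rfl fun i _ => ?_
      have : Y (i+1) = W (p+i) := by
        simp only [hYdef]; rw [if_neg (by omega)]; congr 1; omega
      rw [this]
    have d3 : (∑ a ∈ Finset.Ico (p+q-1) (p+q+r-2), (W a)^2) = ∑ j ∈ range (r-1), (Z (j+1))^2 := by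
      rw [Finset.sum_Ico_eq_sum_range, (by omega : (p+q+r-2) - (p+q-1) = r - 1)]
      refine Finset.sum_congr rfl fun i _ => ?_
      have : Z (i+1) = W (p+q-1+i) := by
        simp only [hZdef]; rw [if_neg (by omega)]; congr 1; omega
      rw [this]
    rw [d0, d1, d2, d3]
    simp only [Finset.range_eq_Ico]
  -- arm identities
  have A1 := armY' (p-1) W
  have A2 := armY' (q-1) Y
  have A3 := armY' (r-1) Z
  rw [hY0] at A2
  rw [hZ0] at A3
  have hp0 : (p:ℝ) ≠ 0 := Nat.cast_ne_zero.mpr (by omega)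
  have hq0 : (q:ℝ) ≠ 0 := Nat.cast_ne_zero.mpr (by omega)
  have hr0 : (r:ℝ) ≠ 0 := Nat.cast_ne_zero.mpr (by omega)
  have cp : ((p-1:ℕ):ℝ) = (p:ℝ)-1 := by
    rw [Nat.cast_sub hp, Nat.cast_one]
  have cq : ((q-1:ℕ):ℝ) = (q:ℝ)-1 := by
    rw [Nat.cast_sub hq, Nat.cast_one]
  have cr : ((r-1:ℕ):ℝ) = (r:ℝ)-1 := by
    rw [Nat.cast_sub hr, Nat.cast_one]
  rw [cp, (by ring : ((p:ℝ)-1)+1 = (p:ℝ))] at A1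
  rw [cq, (by ring : ((q:ℝ)-1)+1 = (q:ℝ))] at A2
  rw [cr, (by ring : ((r:ℝ)-1)+1 = (r:ℝ))] at A3
  have hc : (-2 + ((p:ℝ)-1)/p + ((q:ℝ)-1)/q + ((r:ℝ)-1)/r) = -((1:ℝ)/p + 1/q + 1/r - 1) := by
    field_simp
    ring
  calc v ⬝ᵥ (tTreeMatrix p q r).mulVec v
      = -2*(∑ a ∈ range (p+q+r-2), (W a)^2)
        + 2*(∑ a ∈ range (p+q+r-2), ∑ b ∈ range (p+q+r-2), (if tTreeEdge p q r a b then (1:ℝ) else 0) * (W a * W b)) := by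
        rw [step2, step3, step4]; ring
    _ = -2*((W 0)^2 + (∑ j ∈ range (p-1), (W (j+1))^2)
          + (∑ j ∈ range (q-1), (Y (j+1))^2) + (∑ j ∈ range (r-1), (Z (j+1))^2))
        + 2*((∑ j ∈ range (p-1), W j * W (j+1)) + (∑ j ∈ range (q-1), Y j * Y (j+1))
          + (∑ j ∈ range (r-1), Z j * Z (j+1))) := by
        rw [diag, step5, ← arm1cross, ← arm2cross, ← arm3cross]
    _ = -2*((W 0)^2)
        + ((-2) * (∑ j ∈ range (p-1), (W (j+1))^2) + 2 * (∑ j ∈ range (p-1), W j * W (j+1)))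
        + ((-2) * (∑ j ∈ range (q-1), (Y (j+1))^2) + 2 * (∑ j ∈ range (q-1), Y j * Y (j+1)))
        + ((-2) * (∑ j ∈ range (r-1), (Z (j+1))^2) + 2 * (∑ j ∈ range (r-1), Z j * Z (j+1))) := by
        ring
    _ = -2*((W 0)^2)
        + (-(ttSos (p-1) W) + (((p:ℝ)-1)/p) * (W 0)^2)
        + (-(ttSos (q-1) Y) + (((q:ℝ)-1)/q) * (W 0)^2)
        + (-(ttSos (r-1) Z) + (((r:ℝ)-1)/r) * (W 0)^2) := by
        rw [A1, A2, A3]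
    _ = -(ttSos (p-1) W) - ttSos (q-1) Y - ttSos (r-1) Z
        + (-2 + ((p:ℝ)-1)/p + ((q:ℝ)-1)/q + ((r:ℝ)-1)/r) * (W 0)^2 := by
        ring
    _ = _ := by
        rw [hc]
        ring

end QF

/-- The bilinear form of the tree `T_{p,q,r}` (diagonal `-2`, adjacency off the
diagonal) is negative definite if and only if `1/p + 1/q + 1/r > 1`. -/
theorem stmt_5 (p q r : ℕ) (hp : 1 ≤ p) (hq : 1 ≤ q) (hr : 1 ≤ r) :
    (∀ v : Fin (p + q + r - 2) → ℝ, v ≠ 0 →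
        v ⬝ᵥ (tTreeMatrix p q r).mulVec v < 0) ↔
      (1 : ℚ) / p + 1 / q + 1 / r > 1 := by
  have hp0 : (p:ℝ) ≠ 0 := Nat.cast_ne_zero.mpr (by omega)
  have hq0 : (q:ℝ) ≠ 0 := Nat.cast_ne_zero.mpr (by omega)
  have hr0 : (r:ℝ) ≠ 0 := Nat.cast_ne_zero.mpr (by omega)
  have cp : ((p-1:ℕ):ℝ) = (p:ℝ)-1 := by rw [Nat.cast_sub hp, Nat.cast_one]
  have cq : ((q-1:ℕ):ℝ) = (q:ℝ)-1 := by rw [Nat.cast_sub hq, Nat.cast_one]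
  have cr : ((r-1:ℕ):ℝ) = (r:ℝ)-1 := by rw [Nat.cast_sub hr, Nat.cast_one]
  constructor
  · intro hneg
    -- test vector
    set u : Fin (p + q + r - 2) → ℝ := fun i =>
      if (i:ℕ) ≤ p-1 then ((p:ℝ) - (i:ℕ))/p
      else if (i:ℕ) ≤ p+q-2 then ((q:ℝ) - (((i:ℕ):ℝ) - ((p:ℝ)-1)))/q
      else ((r:ℝ) - (((i:ℕ):ℝ) - ((p:ℝ)+(q:ℝ)-2)))/r with hu
    have hNpos : 0 < p + q + r - 2 := by omega
    have hu0 : u ⟨0, hNpos⟩ = 1 := by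
      rw [hu]
      simp only
      rw [if_pos (by simp)]
      simp [hp0]
    have hune : u ≠ 0 := by
      intro h
      have := congrFun h ⟨0, hNpos⟩
      rw [hu0] at this
      simp at this
    have hval := hneg u hune
    rw [tQform p q r hp hq hr u] at hval
    have hVx : ∀ n (hn : n < p + q + r - 2), ttVx (p+q+r-2) u n = u ⟨n, hn⟩ := by
      intro n hn
      simp [ttVx, hn]
    have hV0 : ttVx (p+q+r-2) u 0 = 1 := by
      rw [hVx 0 (by omega)]
      exact hu0
    have s1 : ttSos (p-1) (ttVx (p+q+r-2) u) = 0 := by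
      apply ttSos_eval
      intro j hj
      rw [hVx j (by omega), hu]
      simp only
      rw [if_pos (by omega : j ≤ p - 1)]
      rw [cp]
      push_cast
      ring
    have s2 : ttSos (q-1) (fun j => if j = 0 then ttVx (p+q+r-2) u 0
        else ttVx (p+q+r-2) u (p-1+j)) = 0 := by
      apply ttSos_eval
      intro j hj
      rcases Nat.eq_zero_or_pos j with hj0 | hj0
      · subst hj0
        rw [if_pos rfl, hV0, cq]
        push_cast
        field_simp
        simp [hq0]
      · rw [if_neg (by omega), hVx (p-1+j) (by omega), hu]
        simp only
        rw [if_neg (by omega : ¬ (p-1+j ≤ p-1)), if_pos (by omega : p-1+j ≤ p+q-2)]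
        rw [cq]
        have : ((p-1+j:ℕ):ℝ) = (p:ℝ) - 1 + j := by
          rw [show p-1+j = p+j-1 by omega, Nat.cast_sub (by omega)]
          push_cast
          ring
        rw [this]
        push_cast
        ring
    have s3 : ttSos (r-1) (fun j => if j = 0 then ttVx (p+q+r-2) u 0
        else ttVx (p+q+r-2) u (p+q-2+j)) = 0 := by
      apply ttSos_eval
      intro j hj
      rcases Nat.eq_zero_or_pos j with hj0 | hj0
      · subst hj0
        rw [if_pos rfl, hV0, cr]
        push_cast
        field_simp
        simp [hr0]
      · rw [if_neg (by omega), hVx (p+q-2+j) (by omega), hu]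
        simp only
        rw [if_neg (by omega : ¬ (p+q-2+j ≤ p-1)), if_neg (by omega : ¬ (p+q-2+j ≤ p+q-2))]
        rw [cr]
        have : ((p+q-2+j:ℕ):ℝ) = (p:ℝ) + q - 2 + j := by
          rw [show p+q-2+j = p+q+j-2 by omega, Nat.cast_sub (by omega)]
          push_cast
          ring
        rw [this]
        push_cast
        ring
    rw [s1, s2, s3, hV0] at hval
    have hR : (1:ℝ) < 1/(p:ℝ) + 1/q + 1/r := by nlinarith [hval]
    have hQ : ((1:ℚ) : ℝ) < (((1:ℚ)/p + 1/q + 1/r : ℚ) : ℝ) := by push_cast; exact hR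
    exact_mod_cast hQ
  · intro hineq v hv
    have hε : (0:ℝ) < (1:ℝ)/p + 1/q + 1/r - 1 := by
      have hQ : ((1:ℚ) : ℝ) < (((1:ℚ)/p + 1/q + 1/r : ℚ) : ℝ) := by exact_mod_cast hineq
      push_cast at hQ
      linarith
    rw [tQform p q r hp hq hr v]
    have nn1 := ttSos_nonneg (p-1) (ttVx (p+q+r-2) v)
    have nn2 := ttSos_nonneg (q-1) (fun j => if j = 0 then ttVx (p+q+r-2) v 0
        else ttVx (p+q+r-2) v (p-1+j))
    have nn3 := ttSos_nonneg (r-1) (fun j => if j = 0 then ttVx (p+q+r-2) v 0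
        else ttVx (p+q+r-2) v (p+q-2+j))
    have nnc : (0:ℝ) ≤ (ttVx (p+q+r-2) v 0)^2 := sq_nonneg _
    have nncε : (0:ℝ) ≤ ((1:ℝ)/p + 1/q + 1/r - 1) * (ttVx (p+q+r-2) v 0)^2 :=
      mul_nonneg hε.le nnc
    by_contra hcon
    push_neg at hcon
    -- all four pieces vanish
    have hz1 : ttSos (p-1) (ttVx (p+q+r-2) v) = 0 := by linarith
    have hz2 : ttSos (q-1) (fun j => if j = 0 then ttVx (p+q+r-2) v 0
        else ttVx (p+q+r-2) v (p-1+j)) = 0 := by linarith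
    have hz3 : ttSos (r-1) (fun j => if j = 0 then ttVx (p+q+r-2) v 0
        else ttVx (p+q+r-2) v (p+q-2+j)) = 0 := by linarith
    have hzcε : ((1:ℝ)/p + 1/q + 1/r - 1) * (ttVx (p+q+r-2) v 0)^2 = 0 := by linarith
    have hzc : (ttVx (p+q+r-2) v 0)^2 = 0 := by
      rcases mul_eq_zero.mp hzcε with h' | h'
      · exact absurd h' (ne_of_gt hε)
      · exact h'
    have hW0 : ttVx (p+q+r-2) v 0 = 0 := by
      exact pow_eq_zero_iff (by norm_num) |>.mp hzc
    have z1 := ttSos_zero (p-1) (ttVx (p+q+r-2) v) hz1 hW0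
    have z2 := ttSos_zero (q-1) _ hz2 (by simpa using hW0)
    have z3 := ttSos_zero (r-1) _ hz3 (by simpa using hW0)
    apply hv
    funext i
    have hiv : v i = ttVx (p+q+r-2) v i.val := by
      simp [ttVx, i.isLt]
    rw [hiv]
    show ttVx (p+q+r-2) v i.val = 0
    have hilt : (i:ℕ) < p + q + r - 2 := i.isLt
    rcases Nat.lt_or_ge (i:ℕ) p with h1 | h1
    · exact z1 (i:ℕ) (by omega)
    · rcases Nat.lt_or_ge (i:ℕ) (p+q-1) with h2 | h2
      · have := z2 ((i:ℕ) - (p-1)) (by omega)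
        rw [if_neg (by omega)] at this
        rw [show p-1+((i:ℕ)-(p-1)) = (i:ℕ) by omega] at this
        exact this
      · have := z3 ((i:ℕ) - (p+q-2)) (by omega)
        rw [if_neg (by omega)] at this
        rw [show p+q-2+((i:ℕ)-(p+q-2)) = (i:ℕ) by omega] at this
        exact this
end
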